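/- Let $k$ be an infinite field of characteristic $p$ and $R = k[t]_{(t)}$ the localization of $k[t]$ at the prime ideal $(t)$. For distinct nonzero $a, b \in k$, there is no element $f \in R$ with $\frac{1}{t-a} - \frac{1}{t-b} = f^p - f$. Consequently the quotient group $R / \{f^p - f : f \in R\}$ is infinite. -/

import Mathlib

/-!
Pass to the fraction field `K` of `k[X]` and use the `(X - a)`-adic valuation `v`. Since `a ≠ b`,
`v (1/(X-a) - 1/(X-b)) = exp 1`. On the other hand `v (g^p - g) ≤ 1` when `v g ≤ 1`, and
`v (g^p - g) = (v g)^p = exp (p n)` with `n ≥ 1` when `v g > 1`; neither equals `exp 1` as `p ≥ 2`.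
In characteristic `p` the elements `f^p - f` form the image of the additive map `frobenius - id`,
so distinct nonzero `a` give distinct classes `1/(X-a)` in the quotient.
-/

open Polynomial IsDedekindDomain WithZero

theorem Valuation.map_pow_sub_self_of_one_lt {A Γ₀ : Type*} [Ring A]
    [LinearOrderedCommGroupWithZero Γ₀] (v : Valuation A Γ₀) {p : ℕ} (hp : 2 ≤ p) {g : A}
    (hg : 1 < v g) : v (g ^ p - g) = v g ^ p := by
  rw [← map_pow]
  refine v.map_sub_eq_of_lt_left ?_
  rw [map_pow]
  calc v g = v g ^ 1 := (pow_one _).symm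
    _ < v g ^ p := pow_lt_pow_right₀ hg hp

theorem Valuation.pow_sub_self_ne_of_eq_exp_one {A : Type*} [Ring A] (v : Valuation A ℤᵐ⁰)
    {p : ℕ} (hp : 2 ≤ p) {x : A} (hx : v x = exp 1) (g : A) : g ^ p - g ≠ x := by
  rintro rfl
  rcases le_or_gt (v g) 1 with hg | hg
  · have : v (g ^ p - g) ≤ 1 :=
      (v.map_sub _ _).trans (max_le (by rw [map_pow]; exact pow_le_one₀ zero_le hg) hg)
    exact absurd (hx ▸ this) (by simp [← exp_zero])
  · obtain ⟨n, hn⟩ : ∃ n : ℤ, exp n = v g := ⟨log (v g), exp_log (zero_lt_one.trans hg).ne'⟩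
    rw [v.map_pow_sub_self_of_one_lt hp hg, ← hn, ← exp_nsmul, exp_inj, nsmul_eq_mul] at hx
    rw [← hn, ← exp_zero, exp_lt_exp] at hg
    nlinarith

theorem RingHom.map_ringInverse {A B : Type*} [Ring A] [DivisionRing B] (φ : A →+* B) {x : A}
    (hx : IsUnit x) : φ (Ring.inverse x) = (φ x)⁻¹ := by
  obtain ⟨u, rfl⟩ := hx
  rw [Ring.inverse_unit, map_units_inv]

theorem mem_closure_range_pow_sub_self_iff {R : Type*} [CommRing R] {p : ℕ} [ExpChar R p]
    {x : R} : x ∈ AddSubgroup.closure (Set.range fun f : R => f ^ p - f) ↔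
      ∃ f : R, f ^ p - f = x := by
  let φ : R →+ R := (frobenius R p).toAddMonoidHom - AddMonoidHom.id R
  change x ∈ AddSubgroup.closure (Set.range φ) ↔ x ∈ Set.range φ
  rw [← AddMonoidHom.coe_range, AddSubgroup.closure_eq, SetLike.mem_coe]

namespace Polynomial

variable {k : Type*} [Field k]

theorem X_sub_C_mem_span_X_sub_C_iff {a b : k} : X - C b ∈ Ideal.span {X - C a} ↔ a = b := by
  rw [Ideal.mem_span_singleton, dvd_iff_isRoot, IsRoot.def, eval_sub, eval_X, eval_C, sub_eq_zero]

noncomputable def idealXSubC (a : k) : HeightOneSpectrum k[X] where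
  asIdeal := Ideal.span {X - C a}
  isPrime := (Ideal.span_singleton_prime (X_sub_C_ne_zero a)).mpr (prime_X_sub_C a)
  ne_bot := by rw [ne_eq, Ideal.span_singleton_eq_bot]; exact X_sub_C_ne_zero a

section FractionField

variable (K : Type*) [Field K] [Algebra k[X] K] [IsFractionRing k[X] K]

theorem valuation_inv_X_sub_C_sub_inv_X_sub_C {a b : k} (hab : a ≠ b) :
    (idealXSubC a).valuation K
      ((algebraMap k[X] K (X - C a))⁻¹ - (algebraMap k[X] K (X - C b))⁻¹) = exp 1 := by
  have hXa : (idealXSubC a).valuation K (algebraMap k[X] K (X - C a)) = exp (-1) := by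
    rw [HeightOneSpectrum.valuation_of_algebraMap,
      HeightOneSpectrum.intValuation_singleton _ (X_sub_C_ne_zero a) rfl]
  have hXb : (idealXSubC a).valuation K (algebraMap k[X] K (X - C b)) = 1 :=
    ((idealXSubC a).valuation_eq_one_iff_notMem (K := K)).mpr
      (X_sub_C_mem_span_X_sub_C_iff.not.mpr hab)
  rw [Valuation.map_sub_eq_of_lt_left, map_inv₀, hXa, exp_neg, inv_inv]
  rw [map_inv₀, map_inv₀, hXa, hXb, inv_one, exp_neg, inv_inv, ← exp_zero, exp_lt_exp]
  exact one_pos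

theorem pow_sub_self_ne_inv_X_sub_C_sub_inv_X_sub_C {p : ℕ} (hp : 2 ≤ p) {a b : k} (hab : a ≠ b)
    (g : K) : g ^ p - g ≠ (algebraMap k[X] K (X - C a))⁻¹ - (algebraMap k[X] K (X - C b))⁻¹ :=
  ((idealXSubC a).valuation K).pow_sub_self_ne_of_eq_exp_one hp
    (valuation_inv_X_sub_C_sub_inv_X_sub_C K hab) g

end FractionField

variable {P : Ideal k[X]} [P.IsPrime]

theorem pow_sub_self_ne_ringInverse_X_sub_C_sub_ringInverse_X_sub_C {p : ℕ} (hp : 2 ≤ p)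
    {a b : k} (hab : a ≠ b) (ha : X - C a ∉ P) (hb : X - C b ∉ P)
    (f : Localization.AtPrime P) :
    f ^ p - f ≠ Ring.inverse (algebraMap k[X] (Localization.AtPrime P) (X - C a)) -
      Ring.inverse (algebraMap k[X] (Localization.AtPrime P) (X - C b)) := by
  have hinv {c : k} (hc : X - C c ∉ P) :
      algebraMap _ (FractionRing k[X])
        (Ring.inverse (algebraMap k[X] (Localization.AtPrime P) (X - C c))) =
        (algebraMap k[X] (FractionRing k[X]) (X - C c))⁻¹ := by
    rw [RingHom.map_ringInverse _ (IsLocalization.map_units _ (⟨X - C c, hc⟩ : P.primeCompl)),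
      ← IsScalarTower.algebraMap_apply]
  intro h
  apply pow_sub_self_ne_inv_X_sub_C_sub_inv_X_sub_C _ hp hab (algebraMap _ (FractionRing k[X]) f)
  rw [← hinv ha, ← hinv hb, ← map_pow, ← map_sub, ← map_sub, h]

theorem X_sub_C_notMem_span_X {a : k} (ha : a ≠ 0) : X - C a ∉ Ideal.span {X} := by
  simpa using (X_sub_C_mem_span_X_sub_C_iff (a := 0) (b := a)).not.mpr ha.symm

end Polynomial

/-- Let `k` be an infinite field of characteristic `p` and `R = k[t]_{(t)}`
the localization of `k[t]` at the prime ideal `(t)`. For distinct nonzero `a, b ∈ k` there is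
no `f ∈ R` with `1/(t-a) - 1/(t-b) = f^p - f` (both `t - a` and `t - b` are units of `R`, and
`1/(t-a)` denotes `Ring.inverse` of the image of `t - a`). Consequently the quotient of the
additive group `R` by the subgroup `{f^p - f : f ∈ R}` is infinite. -/
theorem no_artinSchreier_solution_localization (k : Type*) [Field k] [Infinite k]
    (p : ℕ) (hp : p.Prime) [CharP k p]
    (P : Ideal (Polynomial k)) (hP : P = Ideal.span {Polynomial.X}) [P.IsPrime] :
    (∀ a b : k, a ≠ 0 → b ≠ 0 → a ≠ b →
      ¬∃ f : Localization.AtPrime P,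
        Ring.inverse (algebraMap (Polynomial k) (Localization.AtPrime P)
            (Polynomial.X - Polynomial.C a)) -
          Ring.inverse (algebraMap (Polynomial k) (Localization.AtPrime P)
            (Polynomial.X - Polynomial.C b)) = f ^ p - f) ∧
    Infinite ((Localization.AtPrime P) ⧸
      AddSubgroup.closure (Set.range fun f : Localization.AtPrime P => f ^ p - f)) := by
  subst hP
  have no_solution {a b : k} (ha : a ≠ 0) (hb : b ≠ 0) (hab : a ≠ b) :=
    pow_sub_self_ne_ringInverse_X_sub_C_sub_ringInverse_X_sub_C hp.two_le hab
      (X_sub_C_notMem_span_X ha) (X_sub_C_notMem_span_X hb)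
  refine ⟨fun a b ha hb hab ⟨f, hf⟩ => no_solution ha hb hab f hf.symm, ?_⟩
  have : ExpChar k p := ExpChar.prime hp
  have : ExpChar (Localization.AtPrime (Ideal.span {(X : k[X])})) p :=
    expChar_of_injective_algebraMap (algebraMap k _).injective p
  have : Infinite ({0}ᶜ : Set k) := (Set.finite_singleton 0).infinite_compl.to_subtype
  refine Infinite.of_injective
    (fun a : ({0}ᶜ : Set k) => QuotientAddGroup.mk (Ring.inverse (algebraMap k[X] _ (X - C a.1))))
    fun a b hab => Subtype.ext <| by_contra fun hne => ?_
  obtain ⟨f, hf⟩ := mem_closure_range_pow_sub_self_iff.mp (QuotientAddGroup.eq.mp hab)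
  exact no_solution b.2 a.2 (Ne.symm hne) f (hf.trans (neg_add_eq_sub _ _))
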